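/- Let t(s) = v^{-1}(−R sin(s/v), R cos(s/v), K/2π) be the tangent indicatrix of the helix, and for n ∈ ℕ⁺ set t_n(i) := t((L/n)i) where L = 2πv. Let θ_n be the undirected angle between the normals t_n(0) × t_n(1) and t_n(−1) × t_n(0) (i.e., θ_n = arcsin ‖N_n⁺ × N_n⁻‖ with N_n^± = ±(t_n(0) × t_n(±1))/‖t_n(0) × t_n(±1)‖). Then lim_{n→∞} n·θ_n = K/v. -/

import Mathlib

open Real Filter

noncomputable abbrev E3 := EuclideanSpace ℝ (Fin 3)

noncomputable def vec3 (a b c : ℝ) : E3 := WithLp.toLp 2 ![a, b, c]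

noncomputable def cross (u v : E3) : E3 :=
  vec3 (u 1 * v 2 - u 2 * v 1) (u 2 * v 0 - u 0 * v 2) (u 0 * v 1 - u 1 * v 0)

/-!
Put `c = K/2π` and `b = π/n`, so that `t_n(i)` is the tangent indicatrix at angle `2bi`.
The normal `t_n(0) × t_n(±1)` is a nonzero multiple of `(±c sin b, -c cos b, R cos b)`, and the
sine of the angle between these two vectors is `2y/(1+y²) = sin (2 arctan y)` with
`y = (c/v) tan b`. Hence `θ_n = 2 arctan ((c/v) tan (π/n))` for large `n`, and `n θ_n` tends to
the derivative of `x ↦ 2 arctan ((c/v) tan (πx))` at `0`, which is `2πc/v = K/v`.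
-/

lemma smul_vec3 (r a b c : ℝ) : r • vec3 a b c = vec3 (r * a) (r * b) (r * c) := by
  ext i; fin_cases i <;> rfl

lemma cross_vec3 (a b c d e f : ℝ) :
    cross (vec3 a b c) (vec3 d e f) = vec3 (b * f - c * e) (c * d - a * f) (a * e - b * d) := rfl

lemma norm_vec3 (a b c : ℝ) : ‖vec3 a b c‖ = √(a ^ 2 + b ^ 2 + c ^ 2) := by
  simp [EuclideanSpace.norm_eq, Fin.sum_univ_three, vec3]

lemma cross_smul_left (r : ℝ) (u w : E3) : cross (r • u) w = r • cross u w := by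
  ext i; fin_cases i <;> simp [cross, vec3] <;> ring

lemma cross_smul_right (r : ℝ) (u w : E3) : cross u (r • w) = r • cross u w := by
  ext i; fin_cases i <;> simp [cross, vec3] <;> ring

lemma cross_neg_right (u w : E3) : cross u (-w) = -cross u w := by
  ext i; fin_cases i <;> simp [cross, vec3] <;> ring

lemma norm_cross_normalize (X Y : E3) :
    ‖cross (‖X‖⁻¹ • X) (-(‖Y‖⁻¹ • Y))‖ = ‖cross X Y‖ / (‖X‖ * ‖Y‖) := by
  rw [cross_neg_right, norm_neg, cross_smul_left, cross_smul_right, norm_smul, norm_smul,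
    norm_inv, norm_inv, norm_norm, norm_norm]
  field_simp

lemma norm_cross_div_smul {α β : ℝ} (hα : α ≠ 0) (hβ : β ≠ 0) (X Y : E3) :
    ‖cross (α • X) (β • Y)‖ / (‖α • X‖ * ‖β • Y‖) = ‖cross X Y‖ / (‖X‖ * ‖Y‖) := by
  rw [cross_smul_left, cross_smul_right, norm_smul, norm_smul, norm_smul, norm_smul]
  have : ‖α‖ ≠ 0 := norm_ne_zero_iff.2 hα
  have : ‖β‖ ≠ 0 := norm_ne_zero_iff.2 hβ
  field_simp

lemma arcsin_two_mul_div_one_add_sq {y : ℝ} (hy : |y| ≤ 1) :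
    arcsin (2 * y / (1 + y ^ 2)) = 2 * arctan y := by
  have hsin : sin (2 * arctan y) = 2 * y / (1 + y ^ 2) := by
    have h : √(1 + y ^ 2) ^ 2 = 1 + y ^ 2 := sq_sqrt (by positivity)
    rw [sin_two_mul, sin_arctan, cos_arctan]
    field_simp
    rw [h]
  obtain ⟨hy₁, hy₂⟩ := abs_le.1 hy
  have hlow := arctan_le_arctan_iff.2 hy₁
  have hupp := arctan_le_arctan_iff.2 hy₂
  rw [arctan_neg, arctan_one] at hlow
  rw [arctan_one] at hupp
  rw [← hsin, arcsin_sin] <;> linarith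

lemma HasDerivAt.tendsto_natCast_mul_apply_inv {f : ℝ → ℝ} {f' : ℝ} (hf : HasDerivAt f f' 0)
    (h0 : f 0 = 0) : Tendsto (fun n : ℕ => n * f (n : ℝ)⁻¹) atTop (nhds f') := by
  have hinv : Tendsto (fun n : ℕ => (n : ℝ)⁻¹) atTop (nhdsWithin 0 (Set.Ioi 0)) :=
    tendsto_inv_atTop_nhdsGT_zero.comp tendsto_natCast_atTop_atTop
  simpa [h0, Function.comp_def] using hf.tendsto_slope_zero_right.comp hinv

lemma hasDerivAt_mul_tan_pi_mul (k : ℝ) :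
    HasDerivAt (fun x => k * tan (π * x)) (k * π) 0 := by
  simpa using ((hasDerivAt_tan (by simp)).comp 0 ((hasDerivAt_id 0).const_mul π)).const_mul k

lemma tendsto_mul_tan_pi_div (k : ℝ) :
    Tendsto (fun n : ℕ => k * tan (π / n)) atTop (nhds 0) := by
  simpa [div_eq_mul_inv, Function.comp_def] using
    (hasDerivAt_mul_tan_pi_mul k).continuousAt.tendsto.comp tendsto_inv_atTop_nhds_zero_nat

lemma tendsto_natCast_mul_two_mul_arctan_mul_tan (k : ℝ) :
    Tendsto (fun n : ℕ => n * (2 * arctan (k * tan (π / n)))) atTop (nhds (2 * (k * π))) := by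
  simpa [div_eq_mul_inv] using
    ((hasDerivAt_mul_tan_pi_mul k).arctan.const_mul 2).tendsto_natCast_mul_apply_inv (by simp)

noncomputable def helixTangent (R c v φ : ℝ) : E3 := v⁻¹ • vec3 (-(R * sin φ)) (R * cos φ) c

noncomputable def chordNormal (R c b : ℝ) : E3 := vec3 (c * sin b) (-(c * cos b)) (R * cos b)

lemma cross_helixTangent (R c v b : ℝ) :
    cross (helixTangent R c v 0) (helixTangent R c v (2 * b)) =
      (2 * R * sin b / v ^ 2) • chordNormal R c b := by
  simp only [helixTangent, chordNormal, smul_vec3, cross_vec3, sin_zero, cos_zero, sin_two_mul,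
    cos_two_mul, cos_sq']
  congr 2 <;> ring

lemma norm_chordNormal (R c b : ℝ) :
    ‖chordNormal R c b‖ = √(c ^ 2 * sin b ^ 2 + (R ^ 2 + c ^ 2) * cos b ^ 2) := by
  rw [chordNormal, norm_vec3]
  congr 1
  ring

lemma norm_cross_chordNormal {R c b : ℝ} (hc : 0 ≤ c) (hsin : 0 ≤ sin b) (hcos : 0 ≤ cos b) :
    ‖cross (chordNormal R c b) (chordNormal R c (-b))‖ =
      2 * c * sin b * cos b * √(R ^ 2 + c ^ 2) := by
  rw [chordNormal, chordNormal, sin_neg, cos_neg, cross_vec3, norm_vec3]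
  rw [show (-(c * cos b) * (R * cos b) - R * cos b * -(c * cos b)) ^ 2
      + (R * cos b * (c * -sin b) - c * sin b * (R * cos b)) ^ 2
      + (c * sin b * -(c * cos b) - -(c * cos b) * (c * -sin b)) ^ 2
      = (2 * c * sin b * cos b) ^ 2 * (R ^ 2 + c ^ 2) by ring]
  rw [sqrt_mul (sq_nonneg _), sqrt_sq (by positivity)]

lemma sin_angle_chordNormal {R c v b : ℝ} (hc : 0 ≤ c) (hv : 0 < v) (hv2 : v ^ 2 = R ^ 2 + c ^ 2)
    (hsin : 0 ≤ sin b) (hcos : 0 < cos b) :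
    ‖cross (chordNormal R c b) (chordNormal R c (-b))‖ /
        (‖chordNormal R c b‖ * ‖chordNormal R c (-b)‖) =
      2 * (c / v * tan b) / (1 + (c / v * tan b) ^ 2) := by
  rw [norm_cross_chordNormal hc hsin hcos.le, norm_chordNormal, norm_chordNormal, sin_neg,
    cos_neg, neg_sq, ← hv2, sqrt_sq hv.le, mul_self_sqrt (by positivity), tan_eq_sin_div_cos]
  field_simp
  ring

lemma arcsin_norm_cross_normalize_helixTangent {R c v b : ℝ} (hR : R ≠ 0) (hc : 0 ≤ c)
    (hv : 0 < v) (hv2 : v ^ 2 = R ^ 2 + c ^ 2) (hb₀ : 0 < b) (hb₁ : b < π / 2)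
    (hsmall : |c / v * tan b| ≤ 1) :
    arcsin ‖cross
        (‖cross (helixTangent R c v 0) (helixTangent R c v (2 * b))‖⁻¹ •
          cross (helixTangent R c v 0) (helixTangent R c v (2 * b)))
        (-(‖cross (helixTangent R c v 0) (helixTangent R c v (2 * -b))‖⁻¹ •
          cross (helixTangent R c v 0) (helixTangent R c v (2 * -b))))‖ =
      2 * arctan (c / v * tan b) := by
  have hsin : 0 < sin b := sin_pos_of_pos_of_lt_pi hb₀ (by linarith [pi_pos])
  have hcos : 0 < cos b := cos_pos_of_mem_Ioo ⟨by linarith, hb₁⟩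
  have hscale : ∀ b', sin b' ≠ 0 → 2 * R * sin b' / v ^ 2 ≠ 0 := fun b' h => by
    simp [hR, h, hv.ne']
  rw [norm_cross_normalize, cross_helixTangent, cross_helixTangent,
    norm_cross_div_smul (hscale b hsin.ne') (hscale (-b) (by simp [hsin.ne'])),
    sin_angle_chordNormal hc hv hv2 hsin.le hcos, arcsin_two_mul_div_one_add_sq hsmall]

/-- for the tangent indicatrix `t(s) = v⁻¹(−R sin(s/v), R cos(s/v), K/2π)`
of the helix, with `t_n(i) = t((L/n)i)` and `θ_n = arcsin ‖N_n⁺ × N_n⁻‖` where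
`N_n^± = ±(t_n(0) × t_n(±1))/‖t_n(0) × t_n(±1)‖`, one has `n·θ_n → K/v`. -/
theorem stmt_10 (R K v L : ℝ) (hR : 0 < R) (hK : 0 < K)
    (hv : v = Real.sqrt (R ^ 2 + (K / (2 * π)) ^ 2)) (hL : L = 2 * π * v)
    (t : ℝ → E3)
    (ht : t = fun s => (v⁻¹ : ℝ) •
      vec3 (-(R * Real.sin (s / v))) (R * Real.cos (s / v)) (K / (2 * π)))
    (tn : ℕ → ℤ → E3) (htn : ∀ n : ℕ, ∀ i : ℤ, tn n i = t ((L / n) * i))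
    (Np Nm : ℕ → E3)
    (hNp : ∀ n, Np n = ‖cross (tn n 0) (tn n 1)‖⁻¹ • cross (tn n 0) (tn n 1))
    (hNm : ∀ n, Nm n = -(‖cross (tn n 0) (tn n (-1))‖⁻¹ • cross (tn n 0) (tn n (-1))))
    (θ : ℕ → ℝ) (hθ : ∀ n, θ n = Real.arcsin ‖cross (Np n) (Nm n)‖) :
    Tendsto (fun n : ℕ => (n : ℝ) * θ n) atTop (nhds (K / v)) := by
  set c := K / (2 * π) with hc_def
  have hv_pos : 0 < v := hv ▸ sqrt_pos.2 (by positivity)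
  have hv2 : v ^ 2 = R ^ 2 + c ^ 2 := by rw [hv, sq_sqrt (by positivity)]
  have htn_eq : ∀ n : ℕ, ∀ i : ℤ, tn n i = helixTangent R c v (2 * (π / n * i)) := by
    intro n i
    have harg : L / n * i / v = 2 * (π / n * i) := by rw [hL]; field_simp
    rw [htn, ht]
    dsimp only
    rw [harg]
    rfl
  have hθ_eq : ∀ᶠ n : ℕ in atTop, θ n = 2 * arctan (c / v * tan (π / n)) := by
    have hsmall := (tendsto_mul_tan_pi_div (c / v)).abs.eventually
      (ge_mem_nhds (by simp : |(0 : ℝ)| < 1))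
    filter_upwards [hsmall, eventually_ge_atTop 3] with n hn hn3
    rw [hθ, hNp, hNm, htn_eq, htn_eq, htn_eq]
    push_cast
    rw [mul_zero, mul_zero, mul_one, mul_neg_one]
    exact arcsin_norm_cross_normalize_helixTangent hR.ne' (by positivity) hv_pos hv2
      (by positivity) (div_lt_div_of_pos_left pi_pos two_pos (by exact_mod_cast hn3)) hn
  have hlimit : 2 * (c / v * π) = K / v := by rw [hc_def]; field_simp
  rw [← hlimit]
  exact (tendsto_natCast_mul_two_mul_arctan_mul_tan (c / v)).congr'
    (hθ_eq.mono fun n hn => by simp only [hn])
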